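/- arXiv:1701.07455 — 3 statements merged into one kernel-verified Lean document; each statement's English description precedes it below -/
import Mathlib

section
/- Let $A$ be an invertible bounded operator on a Hilbert space with $g = \|A^{-1}\|^{-1}$, and let $D$ be self-adjoint with $[D,A]$ bounded. For $\kappa > 0$ define $L_\kappa = \begin{pmatrix} \kappa D & A \\ A^* & -\kappa D \end{pmatrix}$. Then $L_\kappa^2 = \begin{pmatrix} \kappa^2 D^2 + AA^* & \kappa [D,A] \\ \kappa [D,A]^* & \kappa^2 D^2 + A^*A \end{pmatrix}$, and consequently $L_\kappa^2 \ge (g^2 - \kappa \|[D,A]\|)\, \mathbf{1}$. -/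
/-!
Block multiplication gives the formula for `L²`. For the bound, write
`L² - (g² - κ‖C‖) = diag(κ²D² + (AA* - g²), κ²D² + (A*A - g²)) + [[κ‖C‖, κC], [κC*, κ‖C‖]]`
with `C = [D, A]`. The diagonal blocks are positive because `AA* ≥ ‖A⁻¹‖⁻²` (conjugate
`A⁻¹(A⁻¹)* ≤ ‖A⁻¹‖²` by `A`), and the second summand is positive by a Schur complement,
since `C*C ≤ ‖C‖²`.
-/

open Matrix
open scoped Matrix.Norms.L2Operator ComplexOrder MatrixOrder

section CStarAlgebra

variable {A : Type*} [CStarAlgebra A] [PartialOrder A] [StarOrderedRing A]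

lemma CStarAlgebra.algebraMap_inv_norm_inv_sq_le_mul_star (u : Aˣ) :
    algebraMap ℝ A (‖(↑u⁻¹ : A)‖⁻¹ ^ 2) ≤ u * star (u : A) := by
  set r := ‖(↑u⁻¹ : A)‖
  rcases eq_or_ne r 0 with hr | hr
  · simp [hr, mul_star_self_nonneg]
  have hconj := star_right_conjugate_le_conjugate
    (CStarAlgebra.mul_star_le_algebraMap_norm_sq (a := (↑u⁻¹ : A))) (u : A)
  have hone : (1 : A) ≤ r ^ 2 • ((u : A) * star (u : A)) := by
    rwa [← mul_assoc, Units.mul_inv, one_mul, ← star_mul, Units.mul_inv, star_one,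
      mul_assoc, Algebra.left_comm, ← Algebra.smul_def] at hconj
  have := smul_le_smul_of_nonneg_left hone (sq_nonneg r⁻¹)
  rwa [smul_smul, ← mul_pow, inv_mul_cancel₀ hr, one_pow, one_smul,
    ← Algebra.algebraMap_eq_smul_one] at this

lemma CStarAlgebra.algebraMap_inv_norm_inv_sq_le_star_mul (u : Aˣ) :
    algebraMap ℝ A (‖(↑u⁻¹ : A)‖⁻¹ ^ 2) ≤ star (u : A) * u := by
  simpa using algebraMap_inv_norm_inv_sq_le_mul_star (star u)

end CStarAlgebra

namespace Matrix

variable {m n : Type*} [Fintype m] [Fintype n]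

lemma PosSemidef.fromBlocks_zero {P : Matrix m m ℂ} {Q : Matrix n n ℂ}
    (hP : P.PosSemidef) (hQ : Q.PosSemidef) : (fromBlocks P 0 0 Q).PosSemidef := by
  refine .of_dotProduct_mulVec_nonneg (hP.isHermitian.fromBlocks (by simp) hQ.isHermitian)
    fun x => ?_
  rw [← Sum.elim_comp_inl_inr x, Function.star_sumElim, fromBlocks_mulVec,
    sumElim_dotProduct_sumElim]
  simpa using add_nonneg (hP.dotProduct_mulVec_nonneg (x ∘ Sum.inl))
    (hQ.dotProduct_mulVec_nonneg (x ∘ Sum.inr))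

variable [DecidableEq m] [DecidableEq n]

lemma algebraMap_real_eq_smul_one (r : ℝ) :
    algebraMap ℝ (Matrix m m ℂ) r = (r : ℂ) • 1 := by
  rw [Algebra.algebraMap_eq_smul_one, Complex.coe_smul]

lemma posSemidef_mul_conjTranspose_sub_of_isUnit {A : Matrix m m ℂ} (hA : IsUnit A) :
    (A * Aᴴ - ((‖A⁻¹‖⁻¹ ^ 2 : ℝ) : ℂ) • 1).PosSemidef := by
  obtain ⟨u, rfl⟩ := hA
  rw [← algebraMap_real_eq_smul_one, ← le_iff, ← coe_units_inv]
  exact CStarAlgebra.algebraMap_inv_norm_inv_sq_le_mul_star u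

lemma posSemidef_conjTranspose_mul_sub_of_isUnit {A : Matrix m m ℂ} (hA : IsUnit A) :
    (Aᴴ * A - ((‖A⁻¹‖⁻¹ ^ 2 : ℝ) : ℂ) • 1).PosSemidef := by
  obtain ⟨u, rfl⟩ := hA
  rw [← algebraMap_real_eq_smul_one, ← le_iff, ← coe_units_inv]
  exact CStarAlgebra.algebraMap_inv_norm_inv_sq_le_star_mul u

lemma posSemidef_fromBlocks_norm_smul_one (X : Matrix m n ℂ) :
    (fromBlocks ((‖X‖ : ℂ) • 1) X Xᴴ ((‖X‖ : ℂ) • 1)).PosSemidef := by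
  rcases eq_or_ne X 0 with rfl | hX
  · simpa using PosSemidef.zero
  have ht : 0 < ‖X‖ := norm_pos_iff.mpr hX
  have hpd : ((‖X‖ : ℂ) • (1 : Matrix m m ℂ)).PosDef :=
    PosDef.one.smul (by exact_mod_cast ht)
  have := hpd.isUnit.invertible
  have hinv : ((‖X‖ : ℂ) • (1 : Matrix m m ℂ))⁻¹ = (‖X‖⁻¹ : ℝ) • 1 :=
    inv_eq_right_inv (by simp [smul_smul, ht.ne'])
  have hsq : (((‖X‖ ^ 2 : ℝ) : ℂ) • 1 - Xᴴ * X).PosSemidef := by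
    have := IsSelfAdjoint.le_algebraMap_norm_self (isHermitian_conjTranspose_mul_self X)
    rwa [l2_opNorm_conjTranspose_mul_self, ← sq, algebraMap_real_eq_smul_one] at this
  have hschur : (‖X‖ : ℂ) • (1 : Matrix n n ℂ) - Xᴴ * ((‖X‖⁻¹ : ℝ) • (1 : Matrix m m ℂ)) * X
      = (‖X‖⁻¹ : ℝ) • (((‖X‖ ^ 2 : ℝ) : ℂ) • 1 - Xᴴ * X) := by
    rw [Matrix.mul_smul, Matrix.mul_one, Matrix.smul_mul, smul_sub, Complex.coe_smul,
      Complex.coe_smul, smul_smul, sq, inv_mul_cancel_left₀ ht.ne']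
  rw [PosDef.fromBlocks₁₁ X _ hpd, hinv, hschur]
  exact hsq.smul (inv_nonneg.mpr ht.le)

lemma posSemidef_fromBlocks_sub_of_posSemidef_sub {P : Matrix m m ℂ} {Q : Matrix n n ℂ}
    (X : Matrix m n ℂ) {s : ℝ} (hP : (P - (s : ℂ) • 1).PosSemidef)
    (hQ : (Q - (s : ℂ) • 1).PosSemidef) :
    (fromBlocks P X Xᴴ Q - ((s - ‖X‖ : ℝ) : ℂ) • 1).PosSemidef := by
  have hsplit : fromBlocks P X Xᴴ Q - ((s - ‖X‖ : ℝ) : ℂ) • 1 =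
      fromBlocks (P - (s : ℂ) • 1) 0 0 (Q - (s : ℂ) • 1) +
        fromBlocks ((‖X‖ : ℂ) • 1) X Xᴴ ((‖X‖ : ℂ) • 1) := by
    rw [← fromBlocks_one, fromBlocks_smul, fromBlocks_add, sub_eq_add_neg, fromBlocks_neg,
      fromBlocks_add]
    congr 1 <;> push_cast <;> module
  rw [hsplit]
  exact (hP.fromBlocks_zero hQ).add (posSemidef_fromBlocks_norm_smul_one X)

end Matrix

def spectralLocalizer {R m : Type*} [Star R] [Neg R] [Mul R] (κ : R) (D A : Matrix m m R) :
    Matrix (m ⊕ m) (m ⊕ m) R :=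
  fromBlocks (κ • D) A Aᴴ (-(κ • D))

lemma spectralLocalizer_sq {R m : Type*} [Fintype m] [DecidableEq m] [CommRing R] [StarRing R]
    (κ : R) {D : Matrix m m R} (hD : D.IsHermitian) (A : Matrix m m R) :
    spectralLocalizer κ D A ^ 2 =
      fromBlocks (κ ^ 2 • (D * D) + A * Aᴴ) (κ • (D * A - A * D))
        (κ • (D * A - A * D)ᴴ) (κ ^ 2 • (D * D) + Aᴴ * A) := by
  rw [spectralLocalizer, sq, fromBlocks_multiply]
  congr 1 <;>
    simp only [conjTranspose_sub, conjTranspose_mul, hD.eq, Matrix.neg_mul, Matrix.mul_neg,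
      smul_mul_assoc, mul_smul_comm] <;>
    module

/-- Let `A` be an invertible matrix with `g = ‖A⁻¹‖⁻¹` and `D` Hermitian, and for
`κ > 0` let `L = [[κD, A], [A^*, -κD]]` be the spectral localizer.  Then
`L² = [[κ²D² + AA^*, κ[D,A]], [κ[D,A]^*, κ²D² + A^*A]]` and consequently
`L² ≥ (g² - κ‖[D,A]‖) 1`. -/
theorem spectral_localizer_square {n : ℕ} (D A : Matrix (Fin n) (Fin n) ℂ)
    (hD : D.IsHermitian) (hA : IsUnit A)
    (g : ℝ) (hg : g = ‖A⁻¹‖⁻¹) (κ : ℝ) (hκ : 0 < κ)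
    (L : Matrix (Fin n ⊕ Fin n) (Fin n ⊕ Fin n) ℂ)
    (hL : L = Matrix.fromBlocks ((κ : ℂ) • D) A Aᴴ (-((κ : ℂ) • D))) :
    L ^ 2 = Matrix.fromBlocks
        (((κ : ℂ)) ^ 2 • (D * D) + A * Aᴴ) ((κ : ℂ) • (D * A - A * D))
        ((κ : ℂ) • (D * A - A * D)ᴴ) (((κ : ℂ)) ^ 2 • (D * D) + Aᴴ * A) ∧
      (L ^ 2 - (((g ^ 2 - κ * ‖D * A - A * D‖ : ℝ) : ℂ)) • 1).PosSemidef := by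
  obtain rfl : L = spectralLocalizer (κ : ℂ) D A := hL
  rw [spectralLocalizer_sq _ hD]
  refine ⟨rfl, ?_⟩
  have hnorm : ‖(κ : ℂ) • (D * A - A * D)‖ = κ * ‖D * A - A * D‖ := by
    rw [norm_smul, Complex.norm_real, Real.norm_of_nonneg hκ.le]
  have hadj : (κ : ℂ) • (D * A - A * D)ᴴ = ((κ : ℂ) • (D * A - A * D))ᴴ := by
    rw [conjTranspose_smul, Complex.star_def, Complex.conj_ofReal]
  have hDD : ((κ : ℂ) ^ 2 • (D * D)).PosSemidef :=
    (hD.eq ▸ posSemidef_conjTranspose_mul_self D).smul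
      (by rw [← Complex.ofReal_pow]; exact Complex.zero_le_real.mpr (sq_nonneg κ))
  rw [hadj, ← hnorm]
  refine posSemidef_fromBlocks_sub_of_posSemidef_sub _ ?_ ?_ <;> rw [add_sub_assoc, hg]
  · exact hDD.add (posSemidef_mul_conjTranspose_sub_of_isUnit hA)
  · exact hDD.add (posSemidef_conjTranspose_mul_sub_of_isUnit hA)
end

section
/- Let $S$ be the right shift on $\ell^2(\mathbb{Z})$ and $X$ the position operator $X|k\rangle = k|k\rangle$. Fix $n \ge 1$, $\kappa > 0$, $\lambda \in [0,1]$, and consider $L(\lambda) = \begin{pmatrix} \kappa X & \lambda S^n \\ \lambda (S^*)^n & -\kappa X \end{pmatrix}$. Then the spectrum of $L(\lambda)$ is $\{\frac{\kappa}{2}(n \pm ((n-2k)^2 + 4\lambda^2/\kappa^2)^{1/2}) : k \in \mathbb{Z}\}$. -/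
/-- The operator `L(λ) = [[κX, λSⁿ], [λ(S*)ⁿ, -κX]]` on (a dense core of) `ℓ²(ℤ) ⊕ ℓ²(ℤ)`,
where `S` is the right shift `(Sψ)(k) = ψ(k-1)` and `X` the position operator
`(Xψ)(k) = k ψ(k)`, realized as a linear endomorphism of `(ℤ → ℂ) × (ℤ → ℂ)`. -/
noncomputable def shiftLocalizer (κ lam : ℝ) (n : ℕ) :
    ((ℤ → ℂ) × (ℤ → ℂ)) →ₗ[ℂ] ((ℤ → ℂ) × (ℤ → ℂ)) where
  toFun v :=
    (fun k => (κ : ℂ) * (k : ℂ) * v.1 k + (lam : ℂ) * v.2 (k - n),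
     fun k => (lam : ℂ) * v.1 (k + n) - (κ : ℂ) * (k : ℂ) * v.2 k)
  map_add' v w := by
    refine Prod.ext (funext fun k => ?_) (funext fun k => ?_) <;> simp <;> ring
  map_smul' c v := by
    refine Prod.ext (funext fun k => ?_) (funext fun k => ?_) <;> simp <;> ring

/-- The two eigenvalues of the `2×2` block `[[κk, λ], [λ, -κ(k-n)]]`, characterized via the
characteristic equation `(b - κk)(b + κ(k-n)) = λ²`. -/
private lemma shiftLocalizer_quad_iff (κ lam : ℝ) (hκ : 0 < κ) (n : ℕ) (k : ℤ) (b : ℂ) :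
    (b - (κ:ℂ)*(k:ℂ)) * (b + (κ:ℂ)*((k:ℂ) - (n:ℂ))) = (lam:ℂ)^2 ↔
      (b = Complex.ofReal (κ / 2 * (n + Real.sqrt (((n : ℝ) - 2 * k) ^ 2 + 4 * lam ^ 2 / κ ^ 2))) ∨
       b = Complex.ofReal (κ / 2 * (n - Real.sqrt (((n : ℝ) - 2 * k) ^ 2 + 4 * lam ^ 2 / κ ^ 2)))) := by
  have hκ0 : κ ≠ 0 := hκ.ne'
  set D : ℝ := ((n : ℝ) - 2 * k) ^ 2 + 4 * lam ^ 2 / κ ^ 2 with hDdef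
  have hD0 : 0 ≤ D := by positivity
  set s : ℝ := Real.sqrt D with hsdef
  have hs : s ^ 2 = D := Real.sq_sqrt hD0
  have hs' : κ ^ 2 * s ^ 2 = κ ^ 2 * ((n:ℝ) - 2*k) ^ 2 + 4 * lam ^ 2 := by
    rw [hs, hDdef]; field_simp
  have hsC : (κ:ℂ) ^ 2 * (s:ℂ) ^ 2 = (κ:ℂ) ^ 2 * ((n:ℂ) - 2*(k:ℂ)) ^ 2 + 4 * (lam:ℂ) ^ 2 := by
    exact_mod_cast congrArg Complex.ofReal hs'
  have key : (b - (κ:ℂ)*(k:ℂ)) * (b + (κ:ℂ)*((k:ℂ) - (n:ℂ))) - (lam:ℂ)^2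
      = (b - Complex.ofReal (κ / 2 * (n + s))) * (b - Complex.ofReal (κ / 2 * (n - s))) := by
    push_cast
    linear_combination (1/4 : ℂ) * hsC
  constructor
  · intro h
    have h0 : (b - Complex.ofReal (κ / 2 * (n + s))) * (b - Complex.ofReal (κ / 2 * (n - s))) = 0 := by
      rw [← key, h, sub_self]
    rcases mul_eq_zero.mp h0 with h' | h'
    · exact Or.inl (sub_eq_zero.mp h')
    · exact Or.inr (sub_eq_zero.mp h')
  · rintro (rfl | rfl)
    · have hp : (Complex.ofReal (κ / 2 * (n + s)) - Complex.ofReal (κ / 2 * (n + s))) *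
          (Complex.ofReal (κ / 2 * (n + s)) - Complex.ofReal (κ / 2 * (n - s))) = 0 := by
        rw [sub_self, zero_mul]
      linear_combination key + hp
    · have hp : (Complex.ofReal (κ / 2 * (n - s)) - Complex.ofReal (κ / 2 * (n + s))) *
          (Complex.ofReal (κ / 2 * (n - s)) - Complex.ofReal (κ / 2 * (n - s))) = 0 := by
        rw [sub_self, mul_zero]
      linear_combination key + hp

/-- If `b` satisfies the characteristic equation of the `k`-th block, then `b` is an
eigenvalue of the localizer (with eigenvector supported on that block). -/
private lemma shiftLocalizer_hasEigenvalue_of_quad (κ lam : ℝ) (n : ℕ) (k : ℤ) (b : ℂ)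
    (hc : (b - (κ:ℂ)*(k:ℂ)) * (b + (κ:ℂ)*((k:ℂ) - (n:ℂ))) = (lam:ℂ)^2) :
    Module.End.HasEigenvalue (shiftLocalizer κ lam n) b := by
  by_cases hl : lam = 0
  · subst hl
    rw [show (((0:ℝ):ℂ))^2 = 0 by norm_num] at hc
    rcases mul_eq_zero.mp hc with h | h
    · -- `b = κ k`, eigenvector `(δ_k, 0)`
      apply Module.End.hasEigenvalue_of_hasEigenvector
        (x := ((fun m => if m = k then (1:ℂ) else 0, 0) : (ℤ → ℂ) × (ℤ → ℂ)))
      constructor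
      · rw [Module.End.mem_eigenspace_iff]
        refine Prod.ext (funext fun m => ?_) (funext fun m => ?_)
        · by_cases hm : m = k
          · subst hm
            simp [shiftLocalizer, sub_eq_zero.mp h]
          · simp [shiftLocalizer, hm]
        · simp [shiftLocalizer]
      · intro h0
        have := congrFun (congrArg Prod.fst h0) k
        simp at this
    · -- `b = -κ (k - n)`, eigenvector `(0, δ_{k-n})`
      apply Module.End.hasEigenvalue_of_hasEigenvector
        (x := ((0, fun m => if m = k - n then (1:ℂ) else 0) : (ℤ → ℂ) × (ℤ → ℂ)))
      constructor
      · rw [Module.End.mem_eigenspace_iff]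
        refine Prod.ext (funext fun m => ?_) (funext fun m => ?_)
        · simp [shiftLocalizer]
        · by_cases hm : m = k - n
          · subst hm
            simp only [shiftLocalizer, LinearMap.coe_mk, AddHom.coe_mk, if_pos rfl,
              Prod.smul_fst, Prod.smul_snd, Pi.smul_apply, smul_eq_mul, Pi.zero_apply]
            push_cast
            simp only [mul_zero, zero_mul, zero_sub, mul_one]
            linear_combination -h
          · simp [shiftLocalizer, hm]
      · intro h0
        have := congrFun (congrArg Prod.snd h0) (k - n)
        simp at this
  · -- `λ ≠ 0`, eigenvector `(λ δ_k, (b - κk) δ_{k-n})`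
    apply Module.End.hasEigenvalue_of_hasEigenvector
      (x := ((fun m => if m = k then (lam:ℂ) else 0,
              fun m => if m = k - n then b - (κ:ℂ)*(k:ℂ) else 0) : (ℤ → ℂ) × (ℤ → ℂ)))
    constructor
    · rw [Module.End.mem_eigenspace_iff]
      refine Prod.ext (funext fun m => ?_) (funext fun m => ?_)
      · by_cases hm : m = k
        · subst hm
          simp [shiftLocalizer]
          ring
        · have hm' : m - (n:ℤ) ≠ k - n := fun hcon => hm (by omega)
          simp [shiftLocalizer, hm, hm']
      · by_cases hm : m = k - n
        · subst hm
          simp [shiftLocalizer, sub_add_cancel]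
          linear_combination -hc
        · have hm' : m + (n:ℤ) ≠ k := fun hcon => hm (by omega)
          simp [shiftLocalizer, hm, hm']
    · intro h0
      have := congrFun (congrArg Prod.fst h0) k
      simp at this
      exact hl this

/-- The spectrum (= set of eigenvalues, since the localizer has compact resolvent and is
self-adjoint) of `L(λ)` is `{κ/2 (n ± √((n-2k)² + 4λ²/κ²)) : k ∈ ℤ}`. -/
theorem shiftLocalizer_spectrum (κ lam : ℝ) (hκ : 0 < κ) (n : ℕ) (hn : 1 ≤ n)
    (hlam : lam ∈ Set.Icc (0 : ℝ) 1) :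
    {b : ℂ | Module.End.HasEigenvalue (shiftLocalizer κ lam n) b} =
      {b : ℂ | ∃ k : ℤ,
        b = Complex.ofReal (κ / 2 * (n + Real.sqrt (((n : ℝ) - 2 * k) ^ 2 + 4 * lam ^ 2 / κ ^ 2))) ∨
        b = Complex.ofReal (κ / 2 * (n - Real.sqrt (((n : ℝ) - 2 * k) ^ 2 + 4 * lam ^ 2 / κ ^ 2)))} := by
  ext b
  simp only [Set.mem_setOf_eq]
  constructor
  · intro hb
    obtain ⟨v, hv⟩ := hb.exists_hasEigenvector
    have hEq : shiftLocalizer κ lam n v = b • v := hv.apply_eq_smul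
    have h1 : ∀ m : ℤ, (κ:ℂ)*(m:ℂ)*v.1 m + (lam:ℂ)*v.2 (m - n) = b * v.1 m := by
      intro m
      have := congrFun (congrArg Prod.fst hEq) m
      simpa [shiftLocalizer] using this
    have h2 : ∀ m : ℤ, (lam:ℂ)*v.1 (m + n) - (κ:ℂ)*(m:ℂ)*v.2 m = b * v.2 m := by
      intro m
      have := congrFun (congrArg Prod.snd hEq) m
      simpa [shiftLocalizer] using this
    have hk : ∃ k : ℤ, ¬(v.1 k = 0 ∧ v.2 (k - n) = 0) := by
      by_contra h
      push_neg at h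
      apply hv.2
      refine Prod.ext (funext fun m => ?_) (funext fun m => ?_)
      · exact (h m).1
      · simpa using (h (m + n)).2
    obtain ⟨k, hkne⟩ := hk
    have e1 : (κ:ℂ)*(k:ℂ)*v.1 k + (lam:ℂ)*v.2 (k - n) = b * v.1 k := h1 k
    have e2 : (lam:ℂ)*v.1 k - (κ:ℂ)*((k:ℂ) - (n:ℂ))*v.2 (k - n) = b * v.2 (k - n) := by
      have := h2 (k - n)
      rw [sub_add_cancel] at this
      push_cast at this
      exact this
    have hc : (b - (κ:ℂ)*(k:ℂ)) * (b + (κ:ℂ)*((k:ℂ) - (n:ℂ))) = (lam:ℂ)^2 := by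
      rcases not_and_or.mp hkne with hx | hy
      · have h0 : ((b - (κ:ℂ)*(k:ℂ)) * (b + (κ:ℂ)*((k:ℂ) - (n:ℂ))) - (lam:ℂ)^2) * v.1 k = 0 := by
          linear_combination (-(b + (κ:ℂ)*((k:ℂ) - (n:ℂ)))) * e1 + (-(lam:ℂ)) * e2
        rcases mul_eq_zero.mp h0 with h' | h'
        · exact sub_eq_zero.mp h'
        · exact absurd h' hx
      · have h0 : ((b - (κ:ℂ)*(k:ℂ)) * (b + (κ:ℂ)*((k:ℂ) - (n:ℂ))) - (lam:ℂ)^2) * v.2 (k - n) = 0 := by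
          linear_combination (-(lam:ℂ)) * e1 + (-(b - (κ:ℂ)*(k:ℂ))) * e2
        rcases mul_eq_zero.mp h0 with h' | h'
        · exact sub_eq_zero.mp h'
        · exact absurd h' hy
    exact ⟨k, (shiftLocalizer_quad_iff κ lam hκ n k b).mp hc⟩
  · rintro ⟨k, hb⟩
    exact shiftLocalizer_hasEigenvalue_of_quad κ lam n k b
      ((shiftLocalizer_quad_iff κ lam hκ n k b).mpr hb)
end

section
/- Let $A$ be unitary and $P, N$ elements of a unital C*-algebra with $0 \le P, N \le 1$ and $PN = 0$. Then $(PAP + N^2)(PAP + N^2)^* = (PAP)(PAP)^* + N^4$ and $\|2(PAP+N^2)(PAP+N^2)^* - 1 - (2P^4 + 2N^4 - 1)\| \le 2\|[P^2, A]\|$. -/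
/-!
Since `N` is self-adjoint, `PAP (N²)^* = PA(PN)N = 0`, and taking adjoints kills the other
cross term of `(PAP + N²)(PAP + N²)^*`. The remaining defect is
`(PAP)(PAP)^* - P⁴ = P ((AP² - P²A) A^*) P`, whose norm is at most `‖[P², A]‖`
because `‖P‖ ≤ 1` and `A^*` is unitary.
-/

section StarRing

variable {R : Type*} [Ring R] [StarRing R]

theorem add_mul_star_add_of_mul_star_eq_zero {X Y : R} (hXY : X * star Y = 0) :
    (X + Y) * star (X + Y) = X * star X + Y * star Y := by
  have hYX : Y * star X = 0 := by simpa [star_mul] using congrArg star hXY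
  rw [star_add, mul_add, add_mul, add_mul, hXY, hYX, add_zero, zero_add]

theorem sandwich_mul_star_sub_pow_four {P A : R} (hP : IsSelfAdjoint P) (hA : A ∈ unitary R) :
    P * A * P * star (P * A * P) - P ^ 4 = P * ((A * P ^ 2 - P ^ 2 * A) * star A) * P := by
  have hAA : A * star A = 1 := (Unitary.mem_iff.mp hA).2
  have hP4 : P ^ 4 = P * (P ^ 2 * (A * star A)) * P := by rw [hAA]; noncomm_ring
  rw [hP4, star_mul, star_mul, hP.star_eq]
  noncomm_ring

end StarRing

theorem norm_mul_mul_le_of_norm_le_one {R : Type*} [NonUnitalSeminormedRing R] {P : R}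
    (hP : ‖P‖ ≤ 1) (B : R) : ‖P * B * P‖ ≤ ‖B‖ :=
  calc ‖P * B * P‖ ≤ ‖P‖ * ‖B‖ * ‖P‖ := norm_mul₃_le
    _ ≤ 1 * ‖B‖ * 1 := by gcongr
    _ = ‖B‖ := by ring

theorem norm_two_mul_le {R : Type*} [SeminormedRing R] (x : R) :
    ‖2 * x‖ ≤ 2 * ‖x‖ := by
  rw [two_mul x, two_mul]
  exact norm_add_le x x

section CStarAlgebra

variable {𝒜 : Type*} [CStarAlgebra 𝒜] [PartialOrder 𝒜] [StarOrderedRing 𝒜]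

theorem norm_sandwich_mul_star_sub_pow_four_le {P A : 𝒜} (hP0 : 0 ≤ P) (hP1 : P ≤ 1)
    (hA : A ∈ unitary 𝒜) :
    ‖P * A * P * star (P * A * P) - P ^ 4‖ ≤ ‖P ^ 2 * A - A * P ^ 2‖ := by
  have hP : ‖P‖ ≤ 1 := (CStarAlgebra.norm_le_one_iff_of_nonneg P hP0).mpr hP1
  rw [sandwich_mul_star_sub_pow_four (IsSelfAdjoint.of_nonneg hP0) hA, norm_sub_rev]
  exact (norm_mul_mul_le_of_norm_le_one hP _).trans_eq
    (CStarRing.norm_mul_mem_unitary _ (Unitary.star_mem hA))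

end CStarAlgebra

theorem lifted_index_estimate_general
    {𝒜 : Type*} [CStarAlgebra 𝒜] [PartialOrder 𝒜] [StarOrderedRing 𝒜]
    (A P N : 𝒜) (hA : A ∈ unitary 𝒜)
    (hP0 : 0 ≤ P) (hP1 : P ≤ 1) (hN0 : 0 ≤ N) (hPN : P * N = 0) :
    (P * A * P + N ^ 2) * star (P * A * P + N ^ 2) =
        (P * A * P) * star (P * A * P) + N ^ 4 ∧
      ‖2 * ((P * A * P + N ^ 2) * star (P * A * P + N ^ 2)) - 1 -
          (2 * P ^ 4 + 2 * N ^ 4 - 1)‖ ≤ 2 * ‖P ^ 2 * A - A * P ^ 2‖ := by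
  have hN : IsSelfAdjoint (N ^ 2) := (IsSelfAdjoint.of_nonneg hN0).pow 2
  have hcross : P * A * P * star (N ^ 2) = 0 := by
    rw [hN.star_eq, sq, ← mul_assoc, mul_assoc _ P, hPN, mul_zero, zero_mul]
  have heq : (P * A * P + N ^ 2) * star (P * A * P + N ^ 2) =
      (P * A * P) * star (P * A * P) + N ^ 4 := by
    rw [add_mul_star_add_of_mul_star_eq_zero hcross, hN.star_eq, ← pow_add]
  refine ⟨heq, ?_⟩
  calc _ = ‖2 * (P * A * P * star (P * A * P) - P ^ 4)‖ := by rw [heq]; congr 1; noncomm_ring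
    _ ≤ 2 * ‖P * A * P * star (P * A * P) - P ^ 4‖ := norm_two_mul_le _
    _ ≤ 2 * ‖P ^ 2 * A - A * P ^ 2‖ := by
        gcongr; exact norm_sandwich_mul_star_sub_pow_four_le hP0 hP1 hA

/-- Let `A` be unitary and `P, N` elements of a unital C*-algebra with `0 ≤ P, N ≤ 1`
and `PN = 0`.  Then `(PAP + N²)(PAP + N²)^* = (PAP)(PAP)^* + N⁴` and
`‖2(PAP + N²)(PAP + N²)^* - 1 - (2P⁴ + 2N⁴ - 1)‖ ≤ 2‖[P², A]‖`. -/
theorem lifted_index_estimate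
    {𝒜 : Type*} [CStarAlgebra 𝒜] [PartialOrder 𝒜] [StarOrderedRing 𝒜]
    (A P N : 𝒜) (hA : A ∈ unitary 𝒜)
    (hP0 : 0 ≤ P) (hP1 : P ≤ 1) (hN0 : 0 ≤ N) (hN1 : N ≤ 1) (hPN : P * N = 0) :
    (P * A * P + N ^ 2) * star (P * A * P + N ^ 2) =
        (P * A * P) * star (P * A * P) + N ^ 4 ∧
      ‖2 * ((P * A * P + N ^ 2) * star (P * A * P + N ^ 2)) - 1 -
          (2 * P ^ 4 + 2 * N ^ 4 - 1)‖ ≤ 2 * ‖P ^ 2 * A - A * P ^ 2‖ :=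
  lifted_index_estimate_general A P N hA hP0 hP1 hN0 hPN
end
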